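/- arXiv:1506.08906 — 2 statements merged into one kernel-verified Lean document; each statement's English description precedes it below -/
import Mathlib

section
/- Let G be a finite directed graph and let G₁, G₂ be subgraphs of G (with vertex sets V₁, V₂ and edge sets E₁, E₂ satisfying s(E_i) ⊆ V_i and r(E_i) ⊆ V_i) such that V(G) = V₁ ∪ V₂ and E(G) = E₁ ∪ E₂, and let Γ be the common subgraph with V(Γ) = V₁ ∩ V₂ and E(Γ) = E₁ ∩ E₂. Assume that every vertex of V(Γ) is a sink in G₁ if and only if it is a sink in G₂. Let (g₁, λ₁) and (g₂, λ₂) be faithful graph weights on G₁ and G₂ respectively. Define g : V(G) → ℝ by g(v) = g₁(v) for v ∈ V₁∖V(Γ), g(v) = g₂(v) for v ∈ V₂∖V(Γ), g(v) = g₁(v) + g₂(v) for v ∈ V(Γ); and define λ : E(G) → ℝ by λ(e) = λ₁(e) if e ∈ E₁∖E(Γ) and r(e) ∈ V₁∖V(Γ); λ(e) = λ₂(e) if e ∈ E₂∖E(Γ) and r(e) ∈ V₂∖V(Γ); λ(e) = λ₁(e)·g₁(r(e)) / (g₁(r(e)) + g₂(r(e))) if e ∈ E₁∖E(Γ) and r(e)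 ∈ V(Γ); λ(e) = λ₂(e)·g₂(r(e)) / (g₁(r(e)) + g₂(r(e))) if e ∈ E₂∖E(Γ) and r(e) ∈ V(Γ); λ(e) = (λ₁(e)·g₁(r(e)) + λ₂(e)·g₂(r(e))) / (g₁(r(e)) + g₂(r(e))) if e ∈ E(Γ). Then (g, λ) is a faithful graph weight on G. -/
/-!
Extend `g₁, g₂` by zero off `V₁, V₂`; then `g = g₁ + g₂`, and the normalisation by
`g₁ + g₂` at the range makes `λ(e) g(r e)` the sum of the two flows `λᵢ(e) gᵢ(r e)`
(zero off `Eᵢ`). Summing over the edges out of `v` gives the weight equation on `G`, because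
the sink condition guarantees that every `Gᵢ` containing a non-sink `v` of `G` has an edge
out of `v`. Positivity of `λ` follows from the same identity.
-/

open Finset

lemma ite_and_ite_eq_ite_add_ite {M : Type*} [AddZeroClass M] {p q : Prop}
    [Decidable p] [Decidable q] (a b : M) (h : p ∨ q) :
    (if p ∧ q then a + b else if p then a else b) =
      (if p then a else 0) + (if q then b else 0) := by
  by_cases hp : p <;> by_cases hq : q <;> simp_all

lemma ite_add_ite_pos {M : Type*} [AddZeroClass M] [Preorder M] [AddLeftStrictMono M]
    {p q : Prop} [Decidable p] [Decidable q] {a b : M}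
    (h : p ∨ q) (ha : p → 0 < a) (hb : q → 0 < b) :
    0 < (if p then a else 0) + (if q then b else 0) := by
  by_cases hp : p <;> by_cases hq : q <;> simp_all [add_pos]

lemma spliced_coeff_mul_ite_add_ite {p₁ p₂ P₁ P₂ : Prop}
    [Decidable p₁] [Decidable p₂] [Decidable P₁] [Decidable P₂] {l₁ l₂ a₁ a₂ : ℝ}
    (hp : p₁ ∨ p₂) (hP₁ : p₁ → P₁) (hP₂ : p₂ → P₂) (ha₁ : P₁ → 0 < a₁) (ha₂ : P₂ → 0 < a₂) :
    (if p₁ ∧ p₂ then (l₁ * a₁ + l₂ * a₂) / (a₁ + a₂)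
      else if p₁ then (if P₂ then l₁ * a₁ / (a₁ + a₂) else l₁)
      else (if P₁ then l₂ * a₂ / (a₁ + a₂) else l₂)) *
      ((if P₁ then a₁ else 0) + (if P₂ then a₂ else 0)) =
    (if p₁ then l₁ * a₁ else 0) + (if p₂ then l₂ * a₂ else 0) := by
  by_cases h₁ : P₁ <;> by_cases h₂ : P₂
  · have := (add_pos (ha₁ h₁) (ha₂ h₂)).ne'
    by_cases hp₁ : p₁ <;> by_cases hp₂ : p₂ <;> simp_all
  all_goals by_cases hp₁ : p₁ <;> by_cases hp₂ : p₂ <;> simp_all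

lemma sum_filter_univ_ite_mem {α M : Type*} [Fintype α] [AddCommMonoid M] (p : α → Prop)
    [DecidablePred p] [DecidableEq α] (t : Finset α) (f : α → M) :
    ∑ x ∈ univ.filter p, (if x ∈ t then f x else 0) = ∑ x ∈ t.filter p, f x := by
  rw [sum_ite_mem, filter_inter, univ_inter]

section Subgraph

variable {V Edge : Type*} [DecidableEq V] (s rng : Edge → V)

lemma ite_mem_eq_sum_filter_source {W : Finset V} {E : Finset Edge}
    (hEs : ∀ e ∈ E, s e ∈ W) {g : V → ℝ} (lam : Edge → ℝ)
    (hw : ∀ v ∈ W, (∃ e ∈ E, s e = v) →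
      g v = ∑ e ∈ E.filter (fun e => s e = v), lam e * g (rng e))
    {v : V} (hv : v ∈ W → ∃ e ∈ E, s e = v) :
    (if v ∈ W then g v else 0) = ∑ e ∈ E.filter (fun e => s e = v), lam e * g (rng e) := by
  split_ifs with hvW
  · exact hw v hvW (hv hvW)
  · refine (sum_eq_zero fun e he => ?_).symm
    rw [mem_filter] at he
    exact absurd (he.2 ▸ hEs e he.1) hvW

lemma exists_source_eq_of_mem {V₁ V₂ : Finset V} {E₁ E₂ : Finset Edge}
    (hEcover : ∀ e : Edge, e ∈ E₁ ∨ e ∈ E₂)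
    (hE₁s : ∀ e ∈ E₁, s e ∈ V₁) (hE₂s : ∀ e ∈ E₂, s e ∈ V₂)
    (hsink : ∀ v ∈ V₁ ∩ V₂, ((∃ e ∈ E₁, s e = v) ↔ (∃ e ∈ E₂, s e = v)))
    {v : V} (hv : ∃ e, s e = v) :
    (v ∈ V₁ → ∃ e ∈ E₁, s e = v) ∧ (v ∈ V₂ → ∃ e ∈ E₂, s e = v) := by
  obtain ⟨e, rfl⟩ := hv
  rcases hEcover e with he | he
  · exact ⟨fun _ => ⟨e, he, rfl⟩, fun h₂ => (hsink _ (mem_inter.2 ⟨hE₁s e he, h₂⟩)).1 ⟨e, he, rfl⟩⟩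
  · exact ⟨fun h₁ => (hsink _ (mem_inter.2 ⟨h₁, hE₂s e he⟩)).2 ⟨e, he, rfl⟩, fun _ => ⟨e, he, rfl⟩⟩

end Subgraph

theorem splice_faithful_graph_weights_general
    {V Edge : Type*} [Fintype Edge] [DecidableEq V] [DecidableEq Edge]
    (s rng : Edge → V)
    (V₁ V₂ : Finset V) (E₁ E₂ : Finset Edge)
    (hVcover : ∀ v : V, v ∈ V₁ ∨ v ∈ V₂)
    (hEcover : ∀ e : Edge, e ∈ E₁ ∨ e ∈ E₂)
    (hE₁s : ∀ e ∈ E₁, s e ∈ V₁) (hE₁r : ∀ e ∈ E₁, rng e ∈ V₁)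
    (hE₂s : ∀ e ∈ E₂, s e ∈ V₂) (hE₂r : ∀ e ∈ E₂, rng e ∈ V₂)
    (hsink : ∀ v ∈ V₁ ∩ V₂, ((∃ e ∈ E₁, s e = v) ↔ (∃ e ∈ E₂, s e = v)))
    (g₁ g₂ : V → ℝ) (lam₁ lam₂ : Edge → ℝ)
    (hg₁pos : ∀ v ∈ V₁, 0 < g₁ v) (hg₂pos : ∀ v ∈ V₂, 0 < g₂ v)
    (hlam₁pos : ∀ e ∈ E₁, 0 < lam₁ e) (hlam₂pos : ∀ e ∈ E₂, 0 < lam₂ e)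
    (hw₁ : ∀ v ∈ V₁, (∃ e ∈ E₁, s e = v) →
      g₁ v = ∑ e ∈ E₁.filter (fun e => s e = v), lam₁ e * g₁ (rng e))
    (hw₂ : ∀ v ∈ V₂, (∃ e ∈ E₂, s e = v) →
      g₂ v = ∑ e ∈ E₂.filter (fun e => s e = v), lam₂ e * g₂ (rng e))
    (g : V → ℝ) (lam : Edge → ℝ)
    (hg : ∀ v : V, g v =
      if v ∈ V₁ ∧ v ∈ V₂ then g₁ v + g₂ v
      else if v ∈ V₁ then g₁ v else g₂ v)
    (hlam : ∀ e : Edge, lam e =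
      if e ∈ E₁ ∧ e ∈ E₂ then
        (lam₁ e * g₁ (rng e) + lam₂ e * g₂ (rng e)) / (g₁ (rng e) + g₂ (rng e))
      else if e ∈ E₁ then
        (if rng e ∈ V₂ then lam₁ e * g₁ (rng e) / (g₁ (rng e) + g₂ (rng e)) else lam₁ e)
      else
        (if rng e ∈ V₁ then lam₂ e * g₂ (rng e) / (g₁ (rng e) + g₂ (rng e)) else lam₂ e)) :
    (∀ v : V, 0 < g v) ∧ (∀ e : Edge, 0 < lam e) ∧
      ∀ v : V, (∃ e : Edge, s e = v) →
        g v = ∑ e ∈ Finset.univ.filter (fun e : Edge => s e = v), lam e * g (rng e) := by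
  have hg' (v : V) : g v = (if v ∈ V₁ then g₁ v else 0) + (if v ∈ V₂ then g₂ v else 0) :=
    (hg v).trans (ite_and_ite_eq_ite_add_ite _ _ (hVcover v))
  have hflow (e : Edge) : lam e * g (rng e) =
      (if e ∈ E₁ then lam₁ e * g₁ (rng e) else 0) + (if e ∈ E₂ then lam₂ e * g₂ (rng e) else 0) := by
    rw [hlam, hg']
    exact spliced_coeff_mul_ite_add_ite (hEcover e) (hE₁r e) (hE₂r e) (hg₁pos _) (hg₂pos _)
  have hgpos (v : V) : 0 < g v :=
    hg' v ▸ ite_add_ite_pos (hVcover v) (hg₁pos v) (hg₂pos v)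
  refine ⟨hgpos, fun e => pos_of_mul_pos_left ?_ (hgpos (rng e)).le, fun v hv => ?_⟩
  · exact hflow e ▸ ite_add_ite_pos (hEcover e)
      (fun h => mul_pos (hlam₁pos e h) (hg₁pos _ (hE₁r e h)))
      (fun h => mul_pos (hlam₂pos e h) (hg₂pos _ (hE₂r e h)))
  obtain ⟨hv₁, hv₂⟩ := exists_source_eq_of_mem s hEcover hE₁s hE₂s hsink hv
  rw [hg', ite_mem_eq_sum_filter_source s rng hE₁s lam₁ hw₁ hv₁,
    ite_mem_eq_sum_filter_source s rng hE₂s lam₂ hw₂ hv₂, ← sum_filter_univ_ite_mem _ E₁,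
    ← sum_filter_univ_ite_mem _ E₂, ← sum_add_distrib]
  exact sum_congr rfl fun e _ => (hflow e).symm

/-- splicing of faithful graph weights: Let `G` be a finite directed graph
covered by two subgraphs `G₁ = (V₁, E₁)`, `G₂ = (V₂, E₂)` (each closed under source and
range), with common subgraph `Γ = (V₁ ∩ V₂, E₁ ∩ E₂)`. Assume a vertex of `Γ` is a sink
in `G₁` iff it is a sink in `G₂`. Given faithful graph weights `(g₁, λ₁)` on `G₁` and
`(g₂, λ₂)` on `G₂`, the spliced pair `(g, λ)` defined by the case formulas is a faithful
graph weight on `G`. -/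
theorem splice_faithful_graph_weights
    {V Edge : Type*} [Fintype V] [Fintype Edge] [DecidableEq V] [DecidableEq Edge]
    (s rng : Edge → V)
    (V₁ V₂ : Finset V) (E₁ E₂ : Finset Edge)
    (hVcover : ∀ v : V, v ∈ V₁ ∨ v ∈ V₂)
    (hEcover : ∀ e : Edge, e ∈ E₁ ∨ e ∈ E₂)
    (hE₁s : ∀ e ∈ E₁, s e ∈ V₁) (hE₁r : ∀ e ∈ E₁, rng e ∈ V₁)
    (hE₂s : ∀ e ∈ E₂, s e ∈ V₂) (hE₂r : ∀ e ∈ E₂, rng e ∈ V₂)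
    (hsink : ∀ v ∈ V₁ ∩ V₂, ((∃ e ∈ E₁, s e = v) ↔ (∃ e ∈ E₂, s e = v)))
    (g₁ g₂ : V → ℝ) (lam₁ lam₂ : Edge → ℝ)
    (hg₁pos : ∀ v ∈ V₁, 0 < g₁ v) (hg₂pos : ∀ v ∈ V₂, 0 < g₂ v)
    (hlam₁pos : ∀ e ∈ E₁, 0 < lam₁ e) (hlam₂pos : ∀ e ∈ E₂, 0 < lam₂ e)
    (hw₁ : ∀ v ∈ V₁, (∃ e ∈ E₁, s e = v) →
      g₁ v = ∑ e ∈ E₁.filter (fun e => s e = v), lam₁ e * g₁ (rng e))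
    (hw₂ : ∀ v ∈ V₂, (∃ e ∈ E₂, s e = v) →
      g₂ v = ∑ e ∈ E₂.filter (fun e => s e = v), lam₂ e * g₂ (rng e))
    (g : V → ℝ) (lam : Edge → ℝ)
    (hg : ∀ v : V, g v =
      if v ∈ V₁ ∧ v ∈ V₂ then g₁ v + g₂ v
      else if v ∈ V₁ then g₁ v else g₂ v)
    (hlam : ∀ e : Edge, lam e =
      if e ∈ E₁ ∧ e ∈ E₂ then
        (lam₁ e * g₁ (rng e) + lam₂ e * g₂ (rng e)) / (g₁ (rng e) + g₂ (rng e))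
      else if e ∈ E₁ then
        (if rng e ∈ V₂ then lam₁ e * g₁ (rng e) / (g₁ (rng e) + g₂ (rng e)) else lam₁ e)
      else
        (if rng e ∈ V₁ then lam₂ e * g₂ (rng e) / (g₁ (rng e) + g₂ (rng e)) else lam₂ e)) :
    (∀ v : V, 0 < g v) ∧ (∀ e : Edge, 0 < lam e) ∧
      ∀ v : V, (∃ e : Edge, s e = v) →
        g v = ∑ e ∈ Finset.univ.filter (fun e : Edge => s e = v), lam e * g (rng e) :=
  splice_faithful_graph_weights_general s rng V₁ V₂ E₁ E₂ hVcover hEcover hE₁s hE₁r hE₂s hE₂r hsink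
    g₁ g₂ lam₁ lam₂ hg₁pos hg₂pos hlam₁pos hlam₂pos hw₁ hw₂ g lam hg hlam
end

section
/- Let B be an oriented finite 2-dimensional CW complex that is the union of two subcomplexes B₁ and B₂ (each closed under the source, range and boundary-word maps) with common intersection subcomplex Δ. Assume that every vertex of Δ is a sink in the 1-skeleton of B₁ if and only if it is a sink in the 1-skeleton of B₂, and that every edge of Δ, viewed as a vertex of the boundary graphs, is a sink in (B₁)_∂ if and only if it is a sink in (B₂)_∂. Let (g₁, λ̃₁, λ₁, η₁) and (g₂, λ̃₂, λ₂, η₂) be faithful 2D CW weights on B₁ and B₂ respectively (so (g_i, λ̃_i) is a faithful graph weight on the 1-skeleton of B_i, (λ_i, η_i) is a faithful graph weight on the boundary graph (B_i)_∂ with boundary-graph edge weight η_i(σ) on the edge of (B_i)_∂ coming from face σ, and λ_i(e) = λ̃_i(e)·g_i(r(e))). Define g and λ̃ by splicing (g₁,λ̃₁) and (g₂,λ̃₂) along the 1-skeleton of Δ, define λ by λ(e) = λ₁(e) on edges of B₁ not in Δ, λ(e) = λ₂(e) on edges of B₂ not in Δ, and λ(e) = λ₁(e) + λ₂(e) on edges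 of Δ, and define the boundary-graph edge weight η̂ by splicing the boundary-graph weights (λ₁, η₁) and (λ₂, η₂) along the boundary graph of Δ. Then (g, λ̃) is a faithful graph weight on the 1-skeleton of B, (λ, η̂) is a faithful graph weight on the boundary graph B_∂, and λ(e) = λ̃(e)·g(r(e)) for every edge e of B. -/
/-!
Splicing is designed so that, for every edge `e`, the product `λ̃(e)·g(r(e))` is the sum of the
products `λ̃ᵢ(e)·gᵢ(r(e))` over the pieces `Bᵢ` containing `e`. Summing over the edges leaving a
vertex `v` therefore adds up the weight equations of `B₁` and `B₂` at `v`, and sink compatibility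
on `Δ` ensures that each piece containing `v` contributes its equation, so the total is `g(v)`.
The boundary graph is spliced by the same rule with `λ` in the role of `g`, and `λ = λ̃·g` holds
piece by piece.
-/

open Finset

lemma ite_add_ite_pos_of_or {M : Type*} [AddCommMonoid M] [PartialOrder M]
    [IsOrderedCancelAddMonoid M] {p q : Prop} [Decidable p] [Decidable q] {a b : M}
    (h : p ∨ q) (ha : p → 0 < a) (hb : q → 0 < b) :
    0 < (if p then a else 0) + (if q then b else 0) := by
  have ha' : 0 ≤ if p then a else 0 := by split_ifs with hp; exacts [(ha hp).le, le_rfl]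
  have hb' : 0 ≤ if q then b else 0 := by split_ifs with hq; exacts [(hb hq).le, le_rfl]
  rcases h with hp | hq
  · exact add_pos_of_pos_of_nonneg (by rw [if_pos hp]; exact ha hp) hb'
  · exact add_pos_of_nonneg_of_pos ha' (by rw [if_pos hq]; exact hb hq)

section GraphWeight

variable {α ι : Type*} [DecidableEq α] [Fintype ι]

def IsFaithfulGraphWeight (src tgt : ι → α) (g : α → ℝ) (w : ι → ℝ) : Prop :=
  (∀ v, 0 < g v) ∧ (∀ e, 0 < w e) ∧
    ∀ v, (∃ e, src e = v) → g v = ∑ e ∈ univ.filter (fun e => src e = v), w e * g (tgt e)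

def IsFaithfulGraphWeightOn (W : α → Prop) (D : ι → Prop) [DecidablePred D]
    (src tgt : ι → α) (g : α → ℝ) (w : ι → ℝ) : Prop :=
  (∀ v, W v → 0 < g v) ∧ (∀ e, D e → 0 < w e) ∧
    ∀ v, W v → (∃ e, D e ∧ src e = v) →
      g v = ∑ e ∈ univ.filter (fun e => D e ∧ src e = v), w e * g (tgt e)

lemma isFaithfulGraphWeightOn_mem_iff [DecidableEq ι] {W : Finset α}
    {D : Finset ι} {src tgt : ι → α} {g : α → ℝ} {w : ι → ℝ} :
    IsFaithfulGraphWeightOn (· ∈ W) (· ∈ D) src tgt g w ↔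
      (∀ v ∈ W, 0 < g v) ∧ (∀ e ∈ D, 0 < w e) ∧
        ∀ v ∈ W, (∃ e ∈ D, src e = v) →
          g v = ∑ e ∈ D.filter (fun e => src e = v), w e * g (tgt e) := by
  have hfilter (v : α) : univ.filter (fun e => e ∈ D ∧ src e = v) = D.filter (src · = v) := by
    ext; simp
  simp only [IsFaithfulGraphWeightOn, hfilter]

lemma sum_filter_eq_ite_of_exists_src_eq {W₁ W₂ : α → Prop} [DecidablePred W₁]
    {D₁ D₂ : ι → Prop} [DecidablePred D₁] {src tgt : ι → α} {g₁ : α → ℝ} {w₁ : ι → ℝ}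
    {v : α} (hout : ∃ e, src e = v) (hEcover : ∀ e, D₁ e ∨ D₂ e)
    (hsrc₁ : ∀ e, D₁ e → W₁ (src e)) (hsrc₂ : ∀ e, D₂ e → W₂ (src e))
    (hsink : W₁ v → W₂ v → (∃ e, D₂ e ∧ src e = v) → ∃ e, D₁ e ∧ src e = v)
    (hweight : ∀ v, W₁ v → (∃ e, D₁ e ∧ src e = v) →
      g₁ v = ∑ e ∈ univ.filter (fun e => D₁ e ∧ src e = v), w₁ e * g₁ (tgt e)) :
    ∑ e ∈ univ.filter (fun e => D₁ e ∧ src e = v), w₁ e * g₁ (tgt e) =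
      if W₁ v then g₁ v else 0 := by
  split_ifs with hv
  · refine (hweight v hv ?_).symm
    obtain ⟨e, he⟩ := hout
    rcases hEcover e with h₁ | h₂
    · exact ⟨e, h₁, he⟩
    · exact hsink hv (he ▸ hsrc₂ e h₂) ⟨e, h₂, he⟩
  · refine sum_eq_zero fun e he => absurd ?_ hv
    obtain ⟨h₁, rfl⟩ := (mem_filter.1 he).2
    exact hsrc₁ e h₁

end GraphWeight

section Splice

variable {α ι : Type*} (W₁ W₂ : α → Prop) [DecidablePred W₁] [DecidablePred W₂]
  (D₁ D₂ : ι → Prop) [DecidablePred D₁] [DecidablePred D₂]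

def spliceVertex (g₁ g₂ : α → ℝ) (v : α) : ℝ :=
  if W₁ v ∧ W₂ v then g₁ v + g₂ v else if W₁ v then g₁ v else g₂ v

noncomputable def spliceEdge (tgt : ι → α) (g₁ g₂ : α → ℝ) (w₁ w₂ : ι → ℝ) (e : ι) : ℝ :=
  if D₁ e ∧ D₂ e then
    (w₁ e * g₁ (tgt e) + w₂ e * g₂ (tgt e)) / (g₁ (tgt e) + g₂ (tgt e))
  else if D₁ e then
    (if W₂ (tgt e) then w₁ e * g₁ (tgt e) / (g₁ (tgt e) + g₂ (tgt e)) else w₁ e)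
  else
    (if W₁ (tgt e) then w₂ e * g₂ (tgt e) / (g₁ (tgt e) + g₂ (tgt e)) else w₂ e)

variable {W₁ W₂ D₁ D₂} {src tgt : ι → α} {g₁ g₂ : α → ℝ} {w₁ w₂ : ι → ℝ}

lemma spliceVertex_eq_ite_add_ite {v : α} (hv : W₁ v ∨ W₂ v) :
    spliceVertex W₁ W₂ g₁ g₂ v = (if W₁ v then g₁ v else 0) + (if W₂ v then g₂ v else 0) := by
  unfold spliceVertex
  split_ifs <;> simp_all

lemma spliceVertex_pos {v : α} (hv : W₁ v ∨ W₂ v) (hg₁ : ∀ v, W₁ v → 0 < g₁ v)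
    (hg₂ : ∀ v, W₂ v → 0 < g₂ v) : 0 < spliceVertex W₁ W₂ g₁ g₂ v := by
  rw [spliceVertex_eq_ite_add_ite hv]
  exact ite_add_ite_pos_of_or hv (hg₁ v) (hg₂ v)

lemma spliceEdge_mul_spliceVertex {e : ι} (he : D₁ e ∨ D₂ e)
    (htgt₁ : ∀ e, D₁ e → W₁ (tgt e)) (htgt₂ : ∀ e, D₂ e → W₂ (tgt e))
    (hg₁ : ∀ v, W₁ v → 0 < g₁ v) (hg₂ : ∀ v, W₂ v → 0 < g₂ v) :
    spliceEdge W₁ W₂ D₁ D₂ tgt g₁ g₂ w₁ w₂ e * spliceVertex W₁ W₂ g₁ g₂ (tgt e) =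
      (if D₁ e then w₁ e * g₁ (tgt e) else 0) + (if D₂ e then w₂ e * g₂ (tgt e) else 0) := by
  have hsum (h₁ : W₁ (tgt e)) (h₂ : W₂ (tgt e)) : g₁ (tgt e) + g₂ (tgt e) ≠ 0 :=
    (add_pos (hg₁ _ h₁) (hg₂ _ h₂)).ne'
  have htgt₁e := htgt₁ e
  have htgt₂e := htgt₂ e
  unfold spliceEdge spliceVertex
  split_ifs <;> first | tauto | (field_simp [hsum, *]; done) | simp_all

lemma spliceEdge_pos {e : ι} (he : D₁ e ∨ D₂ e)
    (htgt₁ : ∀ e, D₁ e → W₁ (tgt e)) (htgt₂ : ∀ e, D₂ e → W₂ (tgt e))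
    (hg₁ : ∀ v, W₁ v → 0 < g₁ v) (hg₂ : ∀ v, W₂ v → 0 < g₂ v)
    (hw₁ : ∀ e, D₁ e → 0 < w₁ e) (hw₂ : ∀ e, D₂ e → 0 < w₂ e) :
    0 < spliceEdge W₁ W₂ D₁ D₂ tgt g₁ g₂ w₁ w₂ e := by
  have hprod :
      0 < spliceEdge W₁ W₂ D₁ D₂ tgt g₁ g₂ w₁ w₂ e * spliceVertex W₁ W₂ g₁ g₂ (tgt e) := by
    rw [spliceEdge_mul_spliceVertex he htgt₁ htgt₂ hg₁ hg₂]
    exact ite_add_ite_pos_of_or he (fun h => mul_pos (hw₁ e h) (hg₁ _ (htgt₁ e h)))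
      (fun h => mul_pos (hw₂ e h) (hg₂ _ (htgt₂ e h)))
  exact pos_of_mul_pos_left hprod (spliceVertex_pos (he.imp (htgt₁ e) (htgt₂ e)) hg₁ hg₂).le

lemma spliceVertex_eq_spliceEdge_mul_spliceVertex {l₁ l₂ : ι → ℝ} {e : ι} (he : D₁ e ∨ D₂ e)
    (htgt₁ : ∀ e, D₁ e → W₁ (tgt e)) (htgt₂ : ∀ e, D₂ e → W₂ (tgt e))
    (hg₁ : ∀ v, W₁ v → 0 < g₁ v) (hg₂ : ∀ v, W₂ v → 0 < g₂ v)
    (hl₁ : ∀ e, D₁ e → l₁ e = w₁ e * g₁ (tgt e)) (hl₂ : ∀ e, D₂ e → l₂ e = w₂ e * g₂ (tgt e)) :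
    spliceVertex D₁ D₂ l₁ l₂ e =
      spliceEdge W₁ W₂ D₁ D₂ tgt g₁ g₂ w₁ w₂ e * spliceVertex W₁ W₂ g₁ g₂ (tgt e) := by
  rw [spliceEdge_mul_spliceVertex he htgt₁ htgt₂ hg₁ hg₂, spliceVertex_eq_ite_add_ite he]
  congr 1
  · split_ifs with h
    exacts [hl₁ e h, rfl]
  · split_ifs with h
    exacts [hl₂ e h, rfl]

variable [DecidableEq α] [Fintype ι]

lemma sum_spliceEdge_mul_spliceVertex (v : α) (hEcover : ∀ e, D₁ e ∨ D₂ e)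
    (htgt₁ : ∀ e, D₁ e → W₁ (tgt e)) (htgt₂ : ∀ e, D₂ e → W₂ (tgt e))
    (hg₁ : ∀ v, W₁ v → 0 < g₁ v) (hg₂ : ∀ v, W₂ v → 0 < g₂ v) :
    ∑ e ∈ univ.filter (fun e => src e = v),
        spliceEdge W₁ W₂ D₁ D₂ tgt g₁ g₂ w₁ w₂ e * spliceVertex W₁ W₂ g₁ g₂ (tgt e) =
      ∑ e ∈ univ.filter (fun e => D₁ e ∧ src e = v), w₁ e * g₁ (tgt e) +
        ∑ e ∈ univ.filter (fun e => D₂ e ∧ src e = v), w₂ e * g₂ (tgt e) := by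
  rw [sum_congr rfl fun e _ => spliceEdge_mul_spliceVertex (hEcover e) htgt₁ htgt₂ hg₁ hg₂,
    sum_add_distrib, ← sum_filter, ← sum_filter, filter_filter, filter_filter]
  simp only [and_comm]

theorem isFaithfulGraphWeight_splice
    (hVcover : ∀ v, W₁ v ∨ W₂ v) (hEcover : ∀ e, D₁ e ∨ D₂ e)
    (hsrc₁ : ∀ e, D₁ e → W₁ (src e)) (htgt₁ : ∀ e, D₁ e → W₁ (tgt e))
    (hsrc₂ : ∀ e, D₂ e → W₂ (src e)) (htgt₂ : ∀ e, D₂ e → W₂ (tgt e))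
    (hsink : ∀ v, W₁ v → W₂ v → ((∃ e, D₁ e ∧ src e = v) ↔ (∃ e, D₂ e ∧ src e = v)))
    (h₁ : IsFaithfulGraphWeightOn W₁ D₁ src tgt g₁ w₁)
    (h₂ : IsFaithfulGraphWeightOn W₂ D₂ src tgt g₂ w₂) :
    IsFaithfulGraphWeight src tgt (spliceVertex W₁ W₂ g₁ g₂)
      (spliceEdge W₁ W₂ D₁ D₂ tgt g₁ g₂ w₁ w₂) := by
  refine ⟨fun v => spliceVertex_pos (hVcover v) h₁.1 h₂.1,
    fun e => spliceEdge_pos (hEcover e) htgt₁ htgt₂ h₁.1 h₂.1 h₁.2.1 h₂.2.1, fun v hout => ?_⟩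
  rw [sum_spliceEdge_mul_spliceVertex v hEcover htgt₁ htgt₂ h₁.1 h₂.1,
    sum_filter_eq_ite_of_exists_src_eq hout hEcover hsrc₁ hsrc₂
      (fun hv₁ hv₂ => (hsink v hv₁ hv₂).2) h₁.2.2,
    sum_filter_eq_ite_of_exists_src_eq hout (fun e => (hEcover e).symm) hsrc₂ hsrc₁
      (fun hv₂ hv₁ => (hsink v hv₁ hv₂).1) h₂.2.2,
    spliceVertex_eq_ite_add_ite (hVcover v)]

end Splice

theorem splice_faithful_2D_CW_weights_general
    {V Ed F BE : Type*} [Fintype Ed] [Fintype BE]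
    [DecidableEq V] [DecidableEq Ed] [DecidableEq F]
    (s rng : Ed → V) (bs br : BE → Ed) (fc : BE → F)
    (V₁ V₂ : Finset V) (E₁ E₂ : Finset Ed) (F₁ F₂ : Finset F)
    (hVcover : ∀ v : V, v ∈ V₁ ∨ v ∈ V₂)
    (hEcover : ∀ e : Ed, e ∈ E₁ ∨ e ∈ E₂)
    (hFcover : ∀ σ : F, σ ∈ F₁ ∨ σ ∈ F₂)
    (hE₁s : ∀ e ∈ E₁, s e ∈ V₁) (hE₁r : ∀ e ∈ E₁, rng e ∈ V₁)
    (hE₂s : ∀ e ∈ E₂, s e ∈ V₂) (hE₂r : ∀ e ∈ E₂, rng e ∈ V₂)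
    (hF₁ : ∀ b : BE, fc b ∈ F₁ → bs b ∈ E₁ ∧ br b ∈ E₁)
    (hF₂ : ∀ b : BE, fc b ∈ F₂ → bs b ∈ E₂ ∧ br b ∈ E₂)
    -- sink compatibility on the intersection subcomplex Δ, for the 1-skeleta:
    (hsink1 : ∀ v ∈ V₁ ∩ V₂, ((∃ e ∈ E₁, s e = v) ↔ (∃ e ∈ E₂, s e = v)))
    -- and for the boundary graphs:
    (hsinkBd : ∀ e ∈ E₁ ∩ E₂,
      ((∃ b : BE, fc b ∈ F₁ ∧ bs b = e) ↔ (∃ b : BE, fc b ∈ F₂ ∧ bs b = e)))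
    -- the two faithful 2D CW weights:
    (g₁ g₂ : V → ℝ) (lt₁ lt₂ l₁ l₂ : Ed → ℝ) (et₁ et₂ : F → ℝ)
    (hg₁pos : ∀ v ∈ V₁, 0 < g₁ v) (hg₂pos : ∀ v ∈ V₂, 0 < g₂ v)
    (hlt₁pos : ∀ e ∈ E₁, 0 < lt₁ e) (hlt₂pos : ∀ e ∈ E₂, 0 < lt₂ e)
    (hl₁pos : ∀ e ∈ E₁, 0 < l₁ e) (hl₂pos : ∀ e ∈ E₂, 0 < l₂ e)
    (het₁pos : ∀ σ ∈ F₁, 0 < et₁ σ) (het₂pos : ∀ σ ∈ F₂, 0 < et₂ σ)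
    -- (gᵢ, λ̃ᵢ) is a graph weight on the 1-skeleton of Bᵢ:
    (hw₁ : ∀ v ∈ V₁, (∃ e ∈ E₁, s e = v) →
      g₁ v = ∑ e ∈ E₁.filter (fun e => s e = v), lt₁ e * g₁ (rng e))
    (hw₂ : ∀ v ∈ V₂, (∃ e ∈ E₂, s e = v) →
      g₂ v = ∑ e ∈ E₂.filter (fun e => s e = v), lt₂ e * g₂ (rng e))
    -- (λᵢ, ηᵢ) is a graph weight on the boundary graph (Bᵢ)_∂:
    (hBdw₁ : ∀ e ∈ E₁, (∃ b : BE, fc b ∈ F₁ ∧ bs b = e) →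
      l₁ e = ∑ b ∈ Finset.univ.filter (fun b : BE => fc b ∈ F₁ ∧ bs b = e),
        et₁ (fc b) * l₁ (br b))
    (hBdw₂ : ∀ e ∈ E₂, (∃ b : BE, fc b ∈ F₂ ∧ bs b = e) →
      l₂ e = ∑ b ∈ Finset.univ.filter (fun b : BE => fc b ∈ F₂ ∧ bs b = e),
        et₂ (fc b) * l₂ (br b))
    -- compatibility λᵢ(e) = λ̃ᵢ(e)·gᵢ(r(e)) on Bᵢ:
    (hcomp₁ : ∀ e ∈ E₁, l₁ e = lt₁ e * g₁ (rng e))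
    (hcomp₂ : ∀ e ∈ E₂, l₂ e = lt₂ e * g₂ (rng e))
    -- the spliced vertex function g and skeleton edge function λ̃:
    (g : V → ℝ) (lamt lam : Ed → ℝ) (etah : BE → ℝ)
    (hg : ∀ v : V, g v =
      if v ∈ V₁ ∧ v ∈ V₂ then g₁ v + g₂ v
      else if v ∈ V₁ then g₁ v else g₂ v)
    (hlamt : ∀ e : Ed, lamt e =
      if e ∈ E₁ ∧ e ∈ E₂ then
        (lt₁ e * g₁ (rng e) + lt₂ e * g₂ (rng e)) / (g₁ (rng e) + g₂ (rng e))
      else if e ∈ E₁ then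
        (if rng e ∈ V₂ then lt₁ e * g₁ (rng e) / (g₁ (rng e) + g₂ (rng e)) else lt₁ e)
      else
        (if rng e ∈ V₁ then lt₂ e * g₂ (rng e) / (g₁ (rng e) + g₂ (rng e)) else lt₂ e))
    -- the spliced boundary-graph vertex function λ:
    (hlam : ∀ e : Ed, lam e =
      if e ∈ E₁ ∧ e ∈ E₂ then l₁ e + l₂ e
      else if e ∈ E₁ then l₁ e else l₂ e)
    -- the spliced boundary-graph edge weight η̂:
    (hetah : ∀ b : BE, etah b =
      if fc b ∈ F₁ ∧ fc b ∈ F₂ then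
        (et₁ (fc b) * l₁ (br b) + et₂ (fc b) * l₂ (br b)) / (l₁ (br b) + l₂ (br b))
      else if fc b ∈ F₁ then
        (if br b ∈ E₂ then et₁ (fc b) * l₁ (br b) / (l₁ (br b) + l₂ (br b))
          else et₁ (fc b))
      else
        (if br b ∈ E₁ then et₂ (fc b) * l₂ (br b) / (l₁ (br b) + l₂ (br b))
          else et₂ (fc b))) :
    -- (g, λ̃) is a faithful graph weight on the 1-skeleton of B:
    ((∀ v : V, 0 < g v) ∧ (∀ e : Ed, 0 < lamt e) ∧
      ∀ v : V, (∃ e : Ed, s e = v) →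
        g v = ∑ e ∈ Finset.univ.filter (fun e : Ed => s e = v), lamt e * g (rng e)) ∧
    -- (λ, η̂) is a faithful graph weight on the boundary graph B_∂:
    ((∀ e : Ed, 0 < lam e) ∧ (∀ b : BE, 0 < etah b) ∧
      ∀ e : Ed, (∃ b : BE, bs b = e) →
        lam e = ∑ b ∈ Finset.univ.filter (fun b : BE => bs b = e), etah b * lam (br b)) ∧
    -- compatibility on all of B:
    (∀ e : Ed, lam e = lamt e * g (rng e)) := by
  obtain rfl : g = spliceVertex (· ∈ V₁) (· ∈ V₂) g₁ g₂ := funext hg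
  obtain rfl : lamt = spliceEdge (· ∈ V₁) (· ∈ V₂) (· ∈ E₁) (· ∈ E₂) rng g₁ g₂ lt₁ lt₂ :=
    funext hlamt
  obtain rfl : lam = spliceVertex (· ∈ E₁) (· ∈ E₂) l₁ l₂ := funext hlam
  obtain rfl : etah = spliceEdge (· ∈ E₁) (· ∈ E₂) (fc · ∈ F₁) (fc · ∈ F₂) br l₁ l₂
      (fun b => et₁ (fc b)) (fun b => et₂ (fc b)) := funext hetah
  refine ⟨isFaithfulGraphWeight_splice hVcover hEcover hE₁s hE₁r hE₂s hE₂r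
      (fun v hv₁ hv₂ => hsink1 v (mem_inter.2 ⟨hv₁, hv₂⟩))
      (isFaithfulGraphWeightOn_mem_iff.2 ⟨hg₁pos, hlt₁pos, hw₁⟩)
      (isFaithfulGraphWeightOn_mem_iff.2 ⟨hg₂pos, hlt₂pos, hw₂⟩),
    isFaithfulGraphWeight_splice hEcover (fun b => hFcover (fc b))
      (fun b hb => (hF₁ b hb).1) (fun b hb => (hF₁ b hb).2)
      (fun b hb => (hF₂ b hb).1) (fun b hb => (hF₂ b hb).2)
      (fun e he₁ he₂ => hsinkBd e (mem_inter.2 ⟨he₁, he₂⟩))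
      ⟨hl₁pos, fun b => het₁pos (fc b), hBdw₁⟩ ⟨hl₂pos, fun b => het₂pos (fc b), hBdw₂⟩,
    fun e => spliceVertex_eq_spliceEdge_mul_spliceVertex (hEcover e) hE₁r hE₂r hg₁pos hg₂pos
      hcomp₁ hcomp₂⟩

/-- splicing of faithful 2D CW weights: Let `B` be an oriented finite
2-dimensional CW complex (vertices `V`, edges `Ed` with source/range `s`, `rng`, faces `F`;
the boundary graph `B_∂` has vertex set `Ed` and one edge `b : BE` for each consecutive
occurrence, with source `bs b`, range `br b`, face `fc b`, and `rng (bs b) = s (br b)`),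
which is the union of two subcomplexes `B₁ = (V₁, E₁, F₁)` and `B₂ = (V₂, E₂, F₂)` (each
closed under source, range, and boundary-word maps) with intersection subcomplex `Δ`.
Assume the sink-compatibility conditions on `Δ` for the 1-skeleta and the boundary graphs.
Given faithful 2D CW weights `(g₁, λ̃₁, λ₁, η₁)` on `B₁` and `(g₂, λ̃₂, λ₂, η₂)` on `B₂`,
the spliced `(g, λ̃)` is a faithful graph weight on the 1-skeleton of `B`, the spliced
`(λ, η̂)` is a faithful graph weight on the boundary graph `B_∂`, and
`λ(e) = λ̃(e)·g(r(e))` for every edge `e`. -/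
theorem splice_faithful_2D_CW_weights
    {V Ed F BE : Type*} [Fintype V] [Fintype Ed] [Fintype F] [Fintype BE]
    [DecidableEq V] [DecidableEq Ed] [DecidableEq F]
    (s rng : Ed → V) (bs br : BE → Ed) (fc : BE → F)
    (hcyc : ∀ b : BE, rng (bs b) = s (br b))
    (V₁ V₂ : Finset V) (E₁ E₂ : Finset Ed) (F₁ F₂ : Finset F)
    (hVcover : ∀ v : V, v ∈ V₁ ∨ v ∈ V₂)
    (hEcover : ∀ e : Ed, e ∈ E₁ ∨ e ∈ E₂)
    (hFcover : ∀ σ : F, σ ∈ F₁ ∨ σ ∈ F₂)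
    (hE₁s : ∀ e ∈ E₁, s e ∈ V₁) (hE₁r : ∀ e ∈ E₁, rng e ∈ V₁)
    (hE₂s : ∀ e ∈ E₂, s e ∈ V₂) (hE₂r : ∀ e ∈ E₂, rng e ∈ V₂)
    (hF₁ : ∀ b : BE, fc b ∈ F₁ → bs b ∈ E₁ ∧ br b ∈ E₁)
    (hF₂ : ∀ b : BE, fc b ∈ F₂ → bs b ∈ E₂ ∧ br b ∈ E₂)
    -- sink compatibility on the intersection subcomplex Δ, for the 1-skeleta:
    (hsink1 : ∀ v ∈ V₁ ∩ V₂, ((∃ e ∈ E₁, s e = v) ↔ (∃ e ∈ E₂, s e = v)))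
    -- and for the boundary graphs:
    (hsinkBd : ∀ e ∈ E₁ ∩ E₂,
      ((∃ b : BE, fc b ∈ F₁ ∧ bs b = e) ↔ (∃ b : BE, fc b ∈ F₂ ∧ bs b = e)))
    -- the two faithful 2D CW weights:
    (g₁ g₂ : V → ℝ) (lt₁ lt₂ l₁ l₂ : Ed → ℝ) (et₁ et₂ : F → ℝ)
    (hg₁pos : ∀ v ∈ V₁, 0 < g₁ v) (hg₂pos : ∀ v ∈ V₂, 0 < g₂ v)
    (hlt₁pos : ∀ e ∈ E₁, 0 < lt₁ e) (hlt₂pos : ∀ e ∈ E₂, 0 < lt₂ e)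
    (hl₁pos : ∀ e ∈ E₁, 0 < l₁ e) (hl₂pos : ∀ e ∈ E₂, 0 < l₂ e)
    (het₁pos : ∀ σ ∈ F₁, 0 < et₁ σ) (het₂pos : ∀ σ ∈ F₂, 0 < et₂ σ)
    -- (gᵢ, λ̃ᵢ) is a graph weight on the 1-skeleton of Bᵢ:
    (hw₁ : ∀ v ∈ V₁, (∃ e ∈ E₁, s e = v) →
      g₁ v = ∑ e ∈ E₁.filter (fun e => s e = v), lt₁ e * g₁ (rng e))
    (hw₂ : ∀ v ∈ V₂, (∃ e ∈ E₂, s e = v) →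
      g₂ v = ∑ e ∈ E₂.filter (fun e => s e = v), lt₂ e * g₂ (rng e))
    -- (λᵢ, ηᵢ) is a graph weight on the boundary graph (Bᵢ)_∂:
    (hBdw₁ : ∀ e ∈ E₁, (∃ b : BE, fc b ∈ F₁ ∧ bs b = e) →
      l₁ e = ∑ b ∈ Finset.univ.filter (fun b : BE => fc b ∈ F₁ ∧ bs b = e),
        et₁ (fc b) * l₁ (br b))
    (hBdw₂ : ∀ e ∈ E₂, (∃ b : BE, fc b ∈ F₂ ∧ bs b = e) →
      l₂ e = ∑ b ∈ Finset.univ.filter (fun b : BE => fc b ∈ F₂ ∧ bs b = e),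
        et₂ (fc b) * l₂ (br b))
    -- compatibility λᵢ(e) = λ̃ᵢ(e)·gᵢ(r(e)) on Bᵢ:
    (hcomp₁ : ∀ e ∈ E₁, l₁ e = lt₁ e * g₁ (rng e))
    (hcomp₂ : ∀ e ∈ E₂, l₂ e = lt₂ e * g₂ (rng e))
    -- the spliced vertex function g and skeleton edge function λ̃:
    (g : V → ℝ) (lamt lam : Ed → ℝ) (etah : BE → ℝ)
    (hg : ∀ v : V, g v =
      if v ∈ V₁ ∧ v ∈ V₂ then g₁ v + g₂ v
      else if v ∈ V₁ then g₁ v else g₂ v)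
    (hlamt : ∀ e : Ed, lamt e =
      if e ∈ E₁ ∧ e ∈ E₂ then
        (lt₁ e * g₁ (rng e) + lt₂ e * g₂ (rng e)) / (g₁ (rng e) + g₂ (rng e))
      else if e ∈ E₁ then
        (if rng e ∈ V₂ then lt₁ e * g₁ (rng e) / (g₁ (rng e) + g₂ (rng e)) else lt₁ e)
      else
        (if rng e ∈ V₁ then lt₂ e * g₂ (rng e) / (g₁ (rng e) + g₂ (rng e)) else lt₂ e))
    -- the spliced boundary-graph vertex function λ:
    (hlam : ∀ e : Ed, lam e =
      if e ∈ E₁ ∧ e ∈ E₂ then l₁ e + l₂ e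
      else if e ∈ E₁ then l₁ e else l₂ e)
    -- the spliced boundary-graph edge weight η̂:
    (hetah : ∀ b : BE, etah b =
      if fc b ∈ F₁ ∧ fc b ∈ F₂ then
        (et₁ (fc b) * l₁ (br b) + et₂ (fc b) * l₂ (br b)) / (l₁ (br b) + l₂ (br b))
      else if fc b ∈ F₁ then
        (if br b ∈ E₂ then et₁ (fc b) * l₁ (br b) / (l₁ (br b) + l₂ (br b))
          else et₁ (fc b))
      else
        (if br b ∈ E₁ then et₂ (fc b) * l₂ (br b) / (l₁ (br b) + l₂ (br b))
          else et₂ (fc b))) :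
    -- (g, λ̃) is a faithful graph weight on the 1-skeleton of B:
    ((∀ v : V, 0 < g v) ∧ (∀ e : Ed, 0 < lamt e) ∧
      ∀ v : V, (∃ e : Ed, s e = v) →
        g v = ∑ e ∈ Finset.univ.filter (fun e : Ed => s e = v), lamt e * g (rng e)) ∧
    -- (λ, η̂) is a faithful graph weight on the boundary graph B_∂:
    ((∀ e : Ed, 0 < lam e) ∧ (∀ b : BE, 0 < etah b) ∧
      ∀ e : Ed, (∃ b : BE, bs b = e) →
        lam e = ∑ b ∈ Finset.univ.filter (fun b : BE => bs b = e), etah b * lam (br b)) ∧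
    -- compatibility on all of B:
    (∀ e : Ed, lam e = lamt e * g (rng e)) :=
  splice_faithful_2D_CW_weights_general s rng bs br fc V₁ V₂ E₁ E₂ F₁ F₂ hVcover hEcover hFcover
    hE₁s hE₁r hE₂s hE₂r hF₁ hF₂ hsink1 hsinkBd g₁ g₂ lt₁ lt₂ l₁ l₂ et₁ et₂ hg₁pos hg₂pos hlt₁pos
    hlt₂pos hl₁pos hl₂pos het₁pos het₂pos hw₁ hw₂ hBdw₁ hBdw₂ hcomp₁ hcomp₂ g lamt lam etah hg hlamt
    hlam hetah
end
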